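/- The conditions (i) dτ^A(V,W) = 0 for all transverse V,W and (ii) η_{A(B} dτ^A(τ_{C)},V) = 0 for all transverse V are independent of the choice of longitudinal frame: if they hold for one longitudinal frame τ_A, they hold for every longitudinal frame τ'_A = Λ^B_A τ_B + V_A. -/

import Mathlib

noncomputable section

def eta' (p : ℕ) (A B : Fin (p+1)) : ℝ :=
  if A = B then (if A = 0 then -1 else 1) else 0

abbrev Spc (d : ℕ) := Fin d → ℝ

def pd {d : ℕ} (f : Spc d → ℝ) (μ : Fin d) (x : Spc d) : ℝ :=
  fderiv ℝ f x (Pi.single μ 1)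

def Sm {d : ℕ} (f : Spc d → ℝ) : Prop := ContDiff ℝ (⊤ : ℕ∞) f

def dcForm {d p : ℕ} (c : Spc d → Fin (p+1) → Fin d → ℝ) (A : Fin (p+1))
    (μ ν : Fin d) (x : Spc d) : ℝ :=
  pd (fun y => c y A ν) μ x - pd (fun y => c y A μ) ν x

/-- Condition (i): `dτ^A(V,W) = 0` for all transverse `V,W`. -/
def CondI (d p : ℕ) (τ : Spc d → Fin d → Fin d → ℝ)
    (c : Spc d → Fin (p+1) → Fin d → ℝ) : Prop :=
  ∀ (x : Spc d) A (v w : Fin d → ℝ),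
    (∀ a, ∑ b, τ x a b * v b = 0) → (∀ a, ∑ b, τ x a b * w b = 0) →
    ∑ μ, ∑ ν, v μ * w ν * dcForm c A μ ν x = 0

/-- Condition (ii): `η_{A(B} dτ^A(τ_{C)},V) = 0` for all transverse `V`. -/
def CondII (d p : ℕ) (τ : Spc d → Fin d → Fin d → ℝ)
    (t c : Spc d → Fin (p+1) → Fin d → ℝ) : Prop :=
  ∀ (x : Spc d) B C (v : Fin d → ℝ),
    (∀ a, ∑ b, τ x a b * v b = 0) →
    ∑ A, (eta' p A B * (∑ μ, ∑ ν, t x C μ * v ν * dcForm c A μ ν x)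
        + eta' p A C * (∑ μ, ∑ ν, t x B μ * v ν * dcForm c A μ ν x)) = 0

/-! ### Auxiliary lemmas -/

section Aux

lemma eta'_symm (p : ℕ) (A B : Fin (p+1)) : eta' p A B = eta' p B A := by
  unfold eta'
  rcases eq_or_ne A B with h | h
  · simp [h]
  · simp [h, Ne.symm h]

lemma eta'_off (p : ℕ) {A B : Fin (p+1)} (h : A ≠ B) : eta' p A B = 0 := by
  simp [eta', h]

lemma eta'_sq (p : ℕ) (B : Fin (p+1)) : eta' p B B * eta' p B B = 1 := by
  unfold eta'; rcases eq_or_ne B 0 with h | h <;> simp [h]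

lemma sum_eta_mul (p : ℕ) (B : Fin (p+1)) (f : Fin (p+1) → ℝ) :
    ∑ A, eta' p A B * f A = eta' p B B * f B := by
  rw [Finset.sum_eq_single B]
  · intro A _ h; rw [eta'_off p h, zero_mul]
  · intro h; exact absurd (Finset.mem_univ B) h

lemma sum_rot {ι κ σ : Type*} [Fintype ι] [Fintype κ] [Fintype σ] (f : ι → κ → σ → ℝ) :
    ∑ a, ∑ b, ∑ c, f a b c = ∑ c, ∑ a, ∑ b, f a b c :=
  calc ∑ a, ∑ b, ∑ c, f a b c
      = ∑ a, ∑ c, ∑ b, f a b c := Finset.sum_congr rfl fun _ _ => Finset.sum_comm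
    _ = ∑ c, ∑ a, ∑ b, f a b c := Finset.sum_comm

lemma Sm.const {d : ℕ} (r : ℝ) : Sm (fun _ : Spc d => r) := contDiff_const

lemma Sm.mul' {d : ℕ} {f g : Spc d → ℝ} (hf : Sm f) (hg : Sm g) :
    Sm (fun x => f x * g x) := ContDiff.mul hf hg

lemma Sm.sum' {d : ℕ} {ι : Type*} (f : ι → Spc d → ℝ) (s : Finset ι)
    (h : ∀ i, Sm (f i)) : Sm (fun x => ∑ i ∈ s, f i x) :=
  ContDiff.sum fun i _ => h i

lemma Sm.diffAt {d : ℕ} {f : Spc d → ℝ} (hf : Sm f) (x : Spc d) :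
    DifferentiableAt ℝ f x := (hf.differentiable (by simp)).differentiableAt

lemma pd_congr {d : ℕ} {f g : Spc d → ℝ} (h : ∀ y, f y = g y) (μ : Fin d) (x : Spc d) :
    pd f μ x = pd g μ x := by
  unfold pd; rw [funext h]

lemma pd_sum {d : ℕ} {ι : Type*} (f : ι → Spc d → ℝ) (s : Finset ι)
    (h : ∀ i, Sm (f i)) (μ : Fin d) (x : Spc d) :
    pd (fun y => ∑ i ∈ s, f i y) μ x = ∑ i ∈ s, pd (f i) μ x := by
  unfold pd
  rw [fderiv_fun_sum (fun i _ => (h i).diffAt x)]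
  simp

lemma pd_mul {d : ℕ} {f g : Spc d → ℝ} (hf : Sm f) (hg : Sm g) (μ : Fin d) (x : Spc d) :
    pd (fun y => f y * g y) μ x = pd f μ x * g x + f x * pd g μ x := by
  unfold pd
  rw [fderiv_fun_mul (hf.diffAt x) (hg.diffAt x)]
  simp
  ring

lemma pd_const_mul {d : ℕ} (r : ℝ) {f : Spc d → ℝ} (hf : Sm f) (μ : Fin d) (x : Spc d) :
    pd (fun y => r * f y) μ x = r * pd f μ x := by
  unfold pd
  rw [fderiv_const_mul (hf.diffAt x)]
  simp

lemma pd_mul_const {d : ℕ} (r : ℝ) {f : Spc d → ℝ} (hf : Sm f) (μ : Fin d) (x : Spc d) :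
    pd (fun y => f y * r) μ x = pd f μ x * r := by
  rw [pd_congr (fun y => mul_comm (f y) r) μ x, pd_const_mul r hf μ x, mul_comm]

lemma pd_const {d : ℕ} (r : ℝ) (μ : Fin d) (x : Spc d) :
    pd (fun _ => r) μ x = 0 := by
  unfold pd; rw [fderiv_fun_const]; simp

lemma factor2 {d : ℕ} (v w X C : Fin d → ℝ) (r : ℝ) (g : Fin d → Fin d → ℝ) :
    ∑ μ, ∑ ν, v μ * w ν * (X μ * C ν - X ν * C μ + r * g μ ν)
    = (∑ μ, v μ * X μ) * (∑ ν, w ν * C ν) - (∑ ν, w ν * X ν) * (∑ μ, v μ * C μ)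
      + r * ∑ μ, ∑ ν, v μ * w ν * g μ ν := by
  simp only [mul_sub, mul_add, Finset.sum_sub_distrib, Finset.sum_add_distrib]
  congr 1
  · congr 1
    · rw [Finset.sum_mul]
      refine Finset.sum_congr rfl fun μ _ => ?_
      rw [Finset.mul_sum]
      refine Finset.sum_congr rfl fun ν _ => ?_
      ring
    · rw [Finset.sum_comm, Finset.sum_mul]
      refine Finset.sum_congr rfl fun ν _ => ?_
      rw [Finset.mul_sum]
      refine Finset.sum_congr rfl fun μ _ => ?_
      ring
  · rw [Finset.mul_sum]
    refine Finset.sum_congr rfl fun μ _ => ?_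
    rw [Finset.mul_sum]
    refine Finset.sum_congr rfl fun ν _ => ?_
    ring

lemma contract_sum {d q : ℕ} (v w : Fin d → ℝ) (X C : Fin q → Fin d → ℝ)
    (r : Fin q → ℝ) (g : Fin q → Fin d → Fin d → ℝ) :
    ∑ μ, ∑ ν, v μ * w ν * (∑ D, (X D μ * C D ν - X D ν * C D μ + r D * g D μ ν))
    = ∑ D, ((∑ μ, v μ * X D μ) * (∑ ν, w ν * C D ν)
        - (∑ ν, w ν * X D ν) * (∑ μ, v μ * C D μ)
        + r D * ∑ μ, ∑ ν, v μ * w ν * g D μ ν) := by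
  calc ∑ μ, ∑ ν, v μ * w ν * (∑ D, (X D μ * C D ν - X D ν * C D μ + r D * g D μ ν))
      = ∑ μ, ∑ ν, ∑ D, v μ * w ν * (X D μ * C D ν - X D ν * C D μ + r D * g D μ ν) := by
        refine Finset.sum_congr rfl fun μ _ => Finset.sum_congr rfl fun ν _ => ?_
        rw [Finset.mul_sum]
    _ = ∑ D, ∑ μ, ∑ ν, v μ * w ν * (X D μ * C D ν - X D ν * C D μ + r D * g D μ ν) :=
        sum_rot _
    _ = _ := Finset.sum_congr rfl fun D _ => factor2 v w (X D) (C D) (r D) (g D)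

/-- Contraction of `τ` with a vector, in terms of the coframe. -/
lemma tau_contract {d p : ℕ} (τ : Spc d → Fin d → Fin d → ℝ)
    (c : Spc d → Fin (p+1) → Fin d → ℝ)
    (hτcc : ∀ x a b, τ x a b = ∑ A, ∑ B, eta' p A B * c x A a * c x B b)
    (x : Spc d) (a : Fin d) (v : Fin d → ℝ) :
    ∑ b, τ x a b * v b
      = ∑ A, ∑ B, eta' p A B * c x A a * (∑ b, c x B b * v b) := by
  calc ∑ b, τ x a b * v b
      = ∑ b, ∑ A, ∑ B, eta' p A B * c x A a * (c x B b * v b) := by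
        refine Finset.sum_congr rfl fun b _ => ?_
        rw [hτcc x a b, Finset.sum_mul]
        refine Finset.sum_congr rfl fun A _ => ?_
        rw [Finset.sum_mul]
        refine Finset.sum_congr rfl fun B _ => ?_
        ring
    _ = ∑ B, ∑ b, ∑ A, eta' p A B * c x A a * (c x B b * v b) := sum_rot _
    _ = ∑ A, ∑ B, ∑ b, eta' p A B * c x A a * (c x B b * v b) := by
        rw [sum_rot]
    _ = ∑ A, ∑ B, eta' p A B * c x A a * (∑ b, c x B b * v b) := by
        refine Finset.sum_congr rfl fun A _ => Finset.sum_congr rfl fun B _ => ?_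
        rw [Finset.mul_sum]

/-- If a vector is annihilated by the coframe, it is transverse. -/
lemma coframe_transverse {d p : ℕ} (τ : Spc d → Fin d → Fin d → ℝ)
    (c : Spc d → Fin (p+1) → Fin d → ℝ)
    (hτcc : ∀ x a b, τ x a b = ∑ A, ∑ B, eta' p A B * c x A a * c x B b)
    (x : Spc d) (v : Fin d → ℝ) (hv : ∀ A, ∑ b, c x A b * v b = 0) :
    ∀ a, ∑ b, τ x a b * v b = 0 := by
  intro a
  rw [tau_contract τ c hτcc x a v]
  simp [hv]

/-- A transverse vector is annihilated by the coframe. -/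
lemma transverse_coframe {d p : ℕ} (τ : Spc d → Fin d → Fin d → ℝ)
    (t c : Spc d → Fin (p+1) → Fin d → ℝ)
    (hdual : ∀ x A B, ∑ a, c x B a * t x A a = if A = B then (1:ℝ) else 0)
    (hτcc : ∀ x a b, τ x a b = ∑ A, ∑ B, eta' p A B * c x A a * c x B b)
    (x : Spc d) (v : Fin d → ℝ) (hv : ∀ a, ∑ b, τ x a b * v b = 0) :
    ∀ A, ∑ b, c x A b * v b = 0 := by
  intro C
  have key : ∑ B, eta' p C B * (∑ b, c x B b * v b) = 0 := by
    have h0 : ∑ a, t x C a * (∑ b, τ x a b * v b) = 0 := by simp [hv]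
    calc ∑ B, eta' p C B * (∑ b, c x B b * v b)
        = ∑ A, ∑ B, (if C = A then (1:ℝ) else 0) * (eta' p A B * (∑ b, c x B b * v b)) := by
          rw [Finset.sum_comm]
          refine Finset.sum_congr rfl fun B _ => ?_
          rw [Finset.sum_eq_single C]
          · simp
          · intro A _ h; simp [Ne.symm h]
          · intro h; exact absurd (Finset.mem_univ C) h
      _ = ∑ A, ∑ B, (∑ a, c x A a * t x C a) * (eta' p A B * (∑ b, c x B b * v b)) := by
          refine Finset.sum_congr rfl fun A _ => Finset.sum_congr rfl fun B _ => ?_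
          rw [hdual x C A]
      _ = ∑ A, ∑ B, ∑ a, t x C a * (eta' p A B * c x A a * (∑ b, c x B b * v b)) := by
          refine Finset.sum_congr rfl fun A _ => Finset.sum_congr rfl fun B _ => ?_
          rw [Finset.sum_mul]
          refine Finset.sum_congr rfl fun a _ => ?_
          ring
      _ = ∑ a, ∑ A, ∑ B, t x C a * (eta' p A B * c x A a * (∑ b, c x B b * v b)) := by
          rw [sum_rot, sum_rot]
      _ = ∑ a, t x C a * (∑ b, τ x a b * v b) := by
          refine Finset.sum_congr rfl fun a _ => ?_
          rw [tau_contract τ c hτcc x a v, Finset.mul_sum]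
          refine Finset.sum_congr rfl fun A _ => ?_
          rw [Finset.mul_sum]
      _ = 0 := h0
  have key2 : eta' p C C * (∑ b, c x C b * v b) = 0 := by
    calc eta' p C C * (∑ b, c x C b * v b)
        = ∑ B, eta' p B C * (∑ b, c x B b * v b) :=
          (sum_eta_mul p C (fun B => ∑ b, c x B b * v b)).symm
      _ = ∑ B, eta' p C B * (∑ b, c x B b * v b) := by
          refine Finset.sum_congr rfl fun B _ => ?_; rw [eta'_symm]
      _ = 0 := key
  have := congrArg (fun r => eta' p C C * r) key2
  simpa [← mul_assoc, eta'_sq p C] using this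

end Aux
/-- The Aristotelian and Augustinian conditions are independent of the choice of
longitudinal frame: if they hold for `τ_A` they hold for any
`τ'_A = Λ^B_A τ_B + V_A`. -/
theorem conditions_frame_independent (d p : ℕ)
    (τ : Spc d → Fin d → Fin d → ℝ)
    (t c : Spc d → Fin (p+1) → Fin d → ℝ)
    (htsm : ∀ A a, Sm (fun x => t x A a)) (hcsm : ∀ A a, Sm (fun x => c x A a))
    (hdual : ∀ x A B, ∑ a, c x B a * t x A a = if A = B then (1:ℝ) else 0)
    (hτcc : ∀ x a b, τ x a b = ∑ A, ∑ B, eta' p A B * c x A a * c x B b)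
    (Λ : Spc d → Matrix (Fin (p+1)) (Fin (p+1)) ℝ)
    (hΛsm : ∀ A B, Sm (fun x => Λ x A B))
    (hΛlor : ∀ x C D, ∑ A, ∑ B, Λ x A C * eta' p A B * Λ x B D = eta' p C D)
    (Vs : Spc d → Fin (p+1) → Fin d → ℝ)
    (hVsm : ∀ A a, Sm (fun x => Vs x A a))
    (hVtr : ∀ x A a, ∑ b, τ x a b * Vs x A b = 0)
    (t' c' : Spc d → Fin (p+1) → Fin d → ℝ)
    (ht'sm : ∀ A a, Sm (fun x => t' x A a)) (hc'sm : ∀ A a, Sm (fun x => c' x A a))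
    (ht' : ∀ x A a, t' x A a = (∑ B, Λ x B A * t x B a) + Vs x A a)
    (hdual' : ∀ x A B, ∑ a, c' x B a * t' x A a = if A = B then (1:ℝ) else 0)
    (hτcc' : ∀ x a b, τ x a b = ∑ A, ∑ B, eta' p A B * c' x A a * c' x B b)
    (h1 : CondI d p τ c) (h2 : CondII d p τ t c) :
    CondI d p τ c' ∧ CondII d p τ t' c' := by
  classical
  -- the transition matrix `P = Λ⁻¹`
  set P : Spc d → Fin (p+1) → Fin (p+1) → ℝ := fun x A B => ∑ a, c' x A a * t x B a
    with hPdef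
  have hPsm : ∀ A B, Sm (fun x => P x A B) := fun A B =>
    Sm.sum' (fun a x => c' x A a * t x B a) Finset.univ
      (fun a => Sm.mul' (hc'sm A a) (htsm B a))
  -- coframes annihilate transverse vectors
  have hc_tr : ∀ (x : Spc d) (v : Fin d → ℝ), (∀ a, ∑ b, τ x a b * v b = 0) →
      ∀ A, ∑ b, c x A b * v b = 0 := fun x v hv =>
    transverse_coframe τ t c hdual hτcc x v hv
  have hc'_tr : ∀ (x : Spc d) (v : Fin d → ℝ), (∀ a, ∑ b, τ x a b * v b = 0) →
      ∀ A, ∑ b, c' x A b * v b = 0 := fun x v hv =>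
    transverse_coframe τ t' c' hdual' hτcc' x v hv
  have hVc : ∀ x A B, ∑ a, c x A a * Vs x B a = 0 := fun x A B =>
    hc_tr x (Vs x B) (fun a => hVtr x B a) A
  have hVc' : ∀ x A B, ∑ a, c' x A a * Vs x B a = 0 := fun x A B =>
    hc'_tr x (Vs x B) (fun a => hVtr x B a) A
  -- `P Λ = 1`
  have hPΛ : ∀ x A B, ∑ D, P x A D * Λ x D B = if A = B then (1:ℝ) else 0 := by
    intro x A B
    calc ∑ D, P x A D * Λ x D B
        = ∑ D, ∑ a, c' x A a * t x D a * Λ x D B := by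
          refine Finset.sum_congr rfl fun D _ => ?_
          rw [hPdef, Finset.sum_mul]
      _ = ∑ a, ∑ D, c' x A a * t x D a * Λ x D B := Finset.sum_comm
      _ = ∑ a, (c' x A a * t' x B a - c' x A a * Vs x B a) := by
          refine Finset.sum_congr rfl fun a _ => ?_
          rw [ht' x B a, mul_add, Finset.mul_sum]
          have : ∀ D, c' x A a * (Λ x D B * t x D a) = c' x A a * t x D a * Λ x D B :=
            fun D => by ring
          rw [Finset.sum_congr rfl fun D _ => this D]
          ring
      _ = (∑ a, c' x A a * t' x B a) - ∑ a, c' x A a * Vs x B a :=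
          Finset.sum_sub_distrib _ _
      _ = if A = B then (1:ℝ) else 0 := by
          rw [hdual' x B A, hVc' x A B, sub_zero]
          exact if_congr eq_comm rfl rfl
  -- `Λ P = 1`
  have hΛP : ∀ x A B, ∑ D, Λ x A D * P x D B = if A = B then (1:ℝ) else 0 := by
    intro x A B
    have hm : (Matrix.of (fun A B => P x A B)) * (Matrix.of (fun A B => Λ x A B)) = 1 := by
      ext i j
      rw [Matrix.mul_apply]
      simp only [Matrix.of_apply, Matrix.one_apply]
      exact hPΛ x i j
    have hm2 := mul_eq_one_comm.mp hm
    have := congrFun (congrFun hm2 A) B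
    rw [Matrix.mul_apply] at this
    simp only [Matrix.of_apply, Matrix.one_apply] at this
    exact this
  -- the new coframe in terms of the old one
  have hc'P : ∀ x A a, c' x A a = ∑ B, P x A B * c x B a := by
    intro x A a
    set w : Fin d → ℝ := fun b => (if a = b then (1:ℝ) else 0) - ∑ B, c x B a * t x B b
      with hwdef
    have hcw : ∀ E, ∑ b, c x E b * w b = 0 := by
      intro E
      have hterm : ∀ b, c x E b * w b
          = (if a = b then c x E b else 0) - ∑ B, c x B a * (c x E b * t x B b) := by
        intro b
        rw [hwdef]
        simp only
        rw [mul_sub, Finset.mul_sum]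
        congr 1
        · split <;> simp
        · exact Finset.sum_congr rfl fun B _ => by ring
      rw [Finset.sum_congr rfl fun b _ => hterm b, Finset.sum_sub_distrib,
        Finset.sum_ite_eq]
      simp only [Finset.mem_univ, if_true]
      rw [Finset.sum_comm]
      have : ∀ B, ∑ b, c x B a * (c x E b * t x B b) = c x B a * (∑ b, c x E b * t x B b) := by
        intro B; rw [Finset.mul_sum]
      rw [Finset.sum_congr rfl fun B _ => this B]
      rw [Finset.sum_congr rfl fun B _ => by rw [hdual x B E]]
      simp [Finset.sum_ite_eq']
    have hτw : ∀ a', ∑ b, τ x a' b * w b = 0 :=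
      coframe_transverse τ c hτcc x w hcw
    have hc'w : ∀ E, ∑ b, c' x E b * w b = 0 :=
      transverse_coframe τ t' c' hdual' hτcc' x w hτw
    have hexp : ∑ b, c' x A b * w b = c' x A a - ∑ B, c x B a * P x A B := by
      have hterm : ∀ b, c' x A b * w b
          = (if a = b then c' x A b else 0) - ∑ B, c x B a * (c' x A b * t x B b) := by
        intro b
        rw [hwdef]
        simp only
        rw [mul_sub, Finset.mul_sum]
        congr 1
        · split <;> simp
        · exact Finset.sum_congr rfl fun B _ => by ring
      rw [Finset.sum_congr rfl fun b _ => hterm b, Finset.sum_sub_distrib,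
        Finset.sum_ite_eq]
      simp only [Finset.mem_univ, if_true]
      rw [Finset.sum_comm]
      congr 1
      refine Finset.sum_congr rfl fun B _ => ?_
      show ∑ b, c x B a * (c' x A b * t x B b) = c x B a * ∑ b, c' x A b * t x B b
      rw [Finset.mul_sum]
    have h0 := hc'w A
    rw [hexp] at h0
    have : c' x A a = ∑ B, c x B a * P x A B := by linarith
    rw [this]
    exact Finset.sum_congr rfl fun B _ => mul_comm _ _
  -- `ηP = Λᵀη`
  have hPη : ∀ x B D, ∑ A, eta' p A B * P x A D = ∑ F, eta' p D F * Λ x F B := by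
    intro x B D
    have hPL : (Matrix.of fun A B => P x A B) * (Matrix.of fun A B => Λ x A B) = 1 := by
      ext i j
      rw [Matrix.mul_apply]
      simp only [Matrix.of_apply, Matrix.one_apply]
      exact hPΛ x i j
    have hLP : (Matrix.of fun A B => Λ x A B) * (Matrix.of fun A B => P x A B) = 1 :=
      mul_eq_one_comm.mp hPL
    have hlor : (Matrix.transpose (Matrix.of fun A B => Λ x A B)) * (Matrix.of (eta' p))
        * (Matrix.of fun A B => Λ x A B) = Matrix.of (eta' p) := by
      ext i j
      simp only [Matrix.mul_apply, Matrix.transpose_apply, Matrix.of_apply,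
        Finset.sum_mul]
      rw [Finset.sum_comm]
      exact hΛlor x i j
    have key : (Matrix.of (eta' p)) * (Matrix.of fun A B => P x A B)
        = (Matrix.transpose (Matrix.of fun A B => Λ x A B)) * (Matrix.of (eta' p)) := by
      calc (Matrix.of (eta' p)) * (Matrix.of fun A B => P x A B)
          = ((Matrix.transpose (Matrix.of fun A B => Λ x A B)) * (Matrix.of (eta' p))
              * (Matrix.of fun A B => Λ x A B)) * (Matrix.of fun A B => P x A B) := by
            rw [hlor]
        _ = ((Matrix.transpose (Matrix.of fun A B => Λ x A B)) * (Matrix.of (eta' p)))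
              * ((Matrix.of fun A B => Λ x A B) * (Matrix.of fun A B => P x A B)) := by
            rw [Matrix.mul_assoc]
        _ = (Matrix.transpose (Matrix.of fun A B => Λ x A B)) * (Matrix.of (eta' p)) := by
            rw [hLP, Matrix.mul_one]
    have hentry := congrFun (congrFun key B) D
    simp only [Matrix.mul_apply, Matrix.transpose_apply, Matrix.of_apply] at hentry
    calc ∑ A, eta' p A B * P x A D
        = ∑ A, eta' p B A * P x A D := by
          refine Finset.sum_congr rfl fun A _ => ?_; rw [eta'_symm]
      _ = ∑ F, Λ x F B * eta' p F D := hentry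
      _ = ∑ F, eta' p D F * Λ x F B := by
          refine Finset.sum_congr rfl fun F _ => ?_
          rw [eta'_symm p F D]; ring
  -- derivative of the relation `ηP = Λᵀη`
  have hPηd : ∀ x B D (ν : Fin d), ∑ A, eta' p A B * pd (fun y => P y A D) ν x
      = ∑ F, eta' p D F * pd (fun y => Λ y F B) ν x := by
    intro x B D ν
    calc ∑ A, eta' p A B * pd (fun y => P y A D) ν x
        = ∑ A, pd (fun y => eta' p A B * P y A D) ν x := by
          refine Finset.sum_congr rfl fun A _ => ?_
          rw [pd_const_mul _ (hPsm A D)]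
      _ = pd (fun y => ∑ A, eta' p A B * P y A D) ν x :=
          (pd_sum (fun A y => eta' p A B * P y A D) Finset.univ
            (fun A => Sm.mul' (Sm.const _) (hPsm A D)) ν x).symm
      _ = pd (fun y => ∑ F, eta' p D F * Λ y F B) ν x :=
          pd_congr (fun y => hPη y B D) ν x
      _ = ∑ F, pd (fun y => eta' p D F * Λ y F B) ν x :=
          pd_sum (fun F y => eta' p D F * Λ y F B) Finset.univ
            (fun F => Sm.mul' (Sm.const _) (hΛsm F B)) ν x
      _ = ∑ F, eta' p D F * pd (fun y => Λ y F B) ν x := by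
          refine Finset.sum_congr rfl fun F _ => ?_
          rw [pd_const_mul _ (hΛsm F B)]
  -- derivative of the Lorentz condition
  have hΛlord : ∀ x C B (ν : Fin d), ∑ A, ∑ F,
      (pd (fun y => Λ y A C) ν x * eta' p A F * Λ x F B
        + Λ x A C * eta' p A F * pd (fun y => Λ y F B) ν x) = 0 := by
    intro x C B ν
    have h0 : pd (fun y => ∑ A, ∑ F, Λ y A C * eta' p A F * Λ y F B) ν x = 0 := by
      rw [pd_congr (fun y => hΛlor y C B) ν x, pd_const]
    calc ∑ A, ∑ F, (pd (fun y => Λ y A C) ν x * eta' p A F * Λ x F B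
          + Λ x A C * eta' p A F * pd (fun y => Λ y F B) ν x)
        = ∑ A, ∑ F, pd (fun y => Λ y A C * eta' p A F * Λ y F B) ν x := by
          refine Finset.sum_congr rfl fun A _ => Finset.sum_congr rfl fun F _ => ?_
          rw [pd_mul (Sm.mul' (hΛsm A C) (Sm.const _)) (hΛsm F B),
            pd_mul_const _ (hΛsm A C)]
      _ = ∑ A, pd (fun y => ∑ F, Λ y A C * eta' p A F * Λ y F B) ν x := by
          refine Finset.sum_congr rfl fun A _ => ?_
          exact (pd_sum (fun F y => Λ y A C * eta' p A F * Λ y F B) Finset.univ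
            (fun F => Sm.mul' (Sm.mul' (hΛsm A C) (Sm.const _)) (hΛsm F B)) ν x).symm
      _ = pd (fun y => ∑ A, ∑ F, Λ y A C * eta' p A F * Λ y F B) ν x :=
          (pd_sum (fun A y => ∑ F, Λ y A C * eta' p A F * Λ y F B) Finset.univ
            (fun A => Sm.sum' (fun F y => Λ y A C * eta' p A F * Λ y F B) Finset.univ
              (fun F => Sm.mul' (Sm.mul' (hΛsm A C) (Sm.const _)) (hΛsm F B))) ν x).symm
      _ = 0 := h0
  -- expansion of `dτ'^A`
  have hdc' : ∀ x A μ ν, dcForm c' A μ ν x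
      = ∑ D, (pd (fun y => P y A D) μ x * c x D ν - pd (fun y => P y A D) ν x * c x D μ
          + P x A D * dcForm c D μ ν x) := by
    intro x A μ ν
    have hexp : ∀ (b ρ : Fin d), pd (fun y => c' y A b) ρ x
        = ∑ D, (pd (fun y => P y A D) ρ x * c x D b + P x A D * pd (fun y => c y D b) ρ x) := by
      intro b ρ
      rw [pd_congr (fun y => hc'P y A b) ρ x,
        pd_sum (fun D y => P y A D * c y D b) Finset.univ
          (fun D => Sm.mul' (hPsm A D) (hcsm D b)) ρ x]
      exact Finset.sum_congr rfl fun D _ => pd_mul (hPsm A D) (hcsm D b) ρ x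
    show pd (fun y => c' y A ν) μ x - pd (fun y => c' y A μ) ν x = _
    rw [hexp ν μ, hexp μ ν, ← Finset.sum_sub_distrib]
    refine Finset.sum_congr rfl fun D _ => ?_
    simp only [dcForm]
    ring
  -- Condition (i) for the new coframe
  have condI : CondI d p τ c' := by
    intro x A v w hv hw
    have hcv := hc_tr x v hv
    have hcw := hc_tr x w hw
    calc ∑ μ, ∑ ν, v μ * w ν * dcForm c' A μ ν x
        = ∑ μ, ∑ ν, v μ * w ν * (∑ D, (pd (fun y => P y A D) μ x * c x D ν
            - pd (fun y => P y A D) ν x * c x D μ + P x A D * dcForm c D μ ν x)) := by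
          refine Finset.sum_congr rfl fun μ _ => Finset.sum_congr rfl fun ν _ => ?_
          rw [hdc' x A μ ν]
      _ = ∑ D, ((∑ μ, v μ * pd (fun y => P y A D) μ x) * (∑ ν, w ν * c x D ν)
            - (∑ ν, w ν * pd (fun y => P y A D) ν x) * (∑ μ, v μ * c x D μ)
            + P x A D * ∑ μ, ∑ ν, v μ * w ν * dcForm c D μ ν x) :=
          contract_sum v w (fun D ρ => pd (fun y => P y A D) ρ x) (fun D b => c x D b)
            (fun D => P x A D) (fun D μ ν => dcForm c D μ ν x)
      _ = 0 := by
          refine Finset.sum_eq_zero fun D _ => ?_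
          have e1 : ∑ ν, w ν * c x D ν = 0 := by
            rw [Finset.sum_congr rfl fun ν _ => mul_comm (w ν) (c x D ν)]
            exact hcw D
          have e2 : ∑ μ, v μ * c x D μ = 0 := by
            rw [Finset.sum_congr rfl fun μ _ => mul_comm (v μ) (c x D μ)]
            exact hcv D
          rw [e1, e2, h1 x D v w hv hw]
          ring
  -- Condition (ii) for the new frame
  have condII : CondII d p τ t' c' := by
    intro x B C v hv
    have hcv := hc_tr x v hv
    -- contraction of the old condition data
    set G : Fin (p+1) → Fin (p+1) → ℝ :=
      fun D E => ∑ μ, ∑ ν, t x E μ * v ν * dcForm c D μ ν x with hG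
    set vdP : Fin (p+1) → Fin (p+1) → ℝ :=
      fun A D => ∑ ν, v ν * pd (fun y => P y A D) ν x with hvdP
    set vdΛ : Fin (p+1) → Fin (p+1) → ℝ :=
      fun F B => ∑ ν, v ν * pd (fun y => Λ y F B) ν x with hvdΛ
    -- contraction of the new frame with the old coframe
    have hct' : ∀ D E, ∑ μ, t' x E μ * c x D μ = Λ x D E := by
      intro D E
      calc ∑ μ, t' x E μ * c x D μ
          = ∑ μ, ((∑ F, Λ x F E * t x F μ * c x D μ) + Vs x E μ * c x D μ) := by
            refine Finset.sum_congr rfl fun μ _ => ?_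
            rw [ht' x E μ, add_mul, Finset.sum_mul]
        _ = (∑ μ, ∑ F, Λ x F E * t x F μ * c x D μ) + ∑ μ, Vs x E μ * c x D μ :=
            Finset.sum_add_distrib
        _ = (∑ F, Λ x F E * (∑ μ, c x D μ * t x F μ)) + 0 := by
            congr 1
            · rw [Finset.sum_comm]
              refine Finset.sum_congr rfl fun F _ => ?_
              rw [Finset.mul_sum]
              exact Finset.sum_congr rfl fun μ _ => by ring
            · rw [Finset.sum_congr rfl fun μ _ => mul_comm (Vs x E μ) (c x D μ)]
              exact hVc x D E
        _ = Λ x D E := by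
            rw [add_zero, Finset.sum_congr rfl fun F _ => by rw [hdual x F D]]
            simp
    -- contraction of the new frame with `dτ^D`
    have ht'G : ∀ D E, ∑ μ, ∑ ν, t' x E μ * v ν * dcForm c D μ ν x
        = ∑ F, Λ x F E * G D F := by
      intro D E
      calc ∑ μ, ∑ ν, t' x E μ * v ν * dcForm c D μ ν x
          = ∑ μ, ∑ ν, ((∑ F, Λ x F E * (t x F μ * v ν * dcForm c D μ ν x))
              + Vs x E μ * v ν * dcForm c D μ ν x) := by
            refine Finset.sum_congr rfl fun μ _ => Finset.sum_congr rfl fun ν _ => ?_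
            rw [ht' x E μ, add_mul, add_mul, Finset.sum_mul, Finset.sum_mul]
            congr 1
            exact Finset.sum_congr rfl fun F _ => by ring
        _ = (∑ μ, ∑ ν, ∑ F, Λ x F E * (t x F μ * v ν * dcForm c D μ ν x))
              + ∑ μ, ∑ ν, Vs x E μ * v ν * dcForm c D μ ν x := by
            simp only [Finset.sum_add_distrib]
        _ = (∑ F, Λ x F E * G D F) + 0 := by
            congr 1
            · rw [sum_rot]
              refine Finset.sum_congr rfl fun F _ => ?_
              rw [hG]
              simp only
              rw [Finset.mul_sum]
              refine Finset.sum_congr rfl fun μ _ => ?_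
              rw [Finset.mul_sum]
            · exact h1 x D (Vs x E) v (fun a => hVtr x E a) hv
        _ = ∑ F, Λ x F E * G D F := add_zero _
    -- the value of the new contraction
    have hT : ∀ A E, ∑ μ, ∑ ν, t' x E μ * v ν * dcForm c' A μ ν x
        = ∑ D, (-(vdP A D * Λ x D E) + P x A D * ∑ F, Λ x F E * G D F) := by
      intro A E
      calc ∑ μ, ∑ ν, t' x E μ * v ν * dcForm c' A μ ν x
          = ∑ μ, ∑ ν, t' x E μ * v ν * (∑ D, (pd (fun y => P y A D) μ x * c x D ν
              - pd (fun y => P y A D) ν x * c x D μ + P x A D * dcForm c D μ ν x)) := by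
            refine Finset.sum_congr rfl fun μ _ => Finset.sum_congr rfl fun ν _ => ?_
            rw [hdc' x A μ ν]
        _ = ∑ D, ((∑ μ, t' x E μ * pd (fun y => P y A D) μ x) * (∑ ν, v ν * c x D ν)
              - (∑ ν, v ν * pd (fun y => P y A D) ν x) * (∑ μ, t' x E μ * c x D μ)
              + P x A D * ∑ μ, ∑ ν, t' x E μ * v ν * dcForm c D μ ν x) :=
            contract_sum (fun μ => t' x E μ) v (fun D ρ => pd (fun y => P y A D) ρ x)
              (fun D b => c x D b) (fun D => P x A D) (fun D μ ν => dcForm c D μ ν x)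
        _ = ∑ D, (-(vdP A D * Λ x D E) + P x A D * ∑ F, Λ x F E * G D F) := by
            refine Finset.sum_congr rfl fun D _ => ?_
            have e1 : ∑ ν, v ν * c x D ν = 0 := by
              rw [Finset.sum_congr rfl fun ν _ => mul_comm (v ν) (c x D ν)]
              exact hcv D
            rw [e1, hct' D E, ht'G D E, hvdP]
            simp only
            ring
    -- contracted derivative identities
    have key1 : ∀ B' D, ∑ A, eta' p A B' * vdP A D = ∑ F, eta' p D F * vdΛ F B' := by
      intro B' D
      calc ∑ A, eta' p A B' * vdP A D
          = ∑ A, ∑ ν, v ν * (eta' p A B' * pd (fun y => P y A D) ν x) := by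
            refine Finset.sum_congr rfl fun A _ => ?_
            rw [hvdP]
            simp only
            rw [Finset.mul_sum]
            exact Finset.sum_congr rfl fun ν _ => by ring
        _ = ∑ ν, ∑ A, v ν * (eta' p A B' * pd (fun y => P y A D) ν x) := Finset.sum_comm
        _ = ∑ ν, ∑ F, v ν * (eta' p D F * pd (fun y => Λ y F B') ν x) := by
            refine Finset.sum_congr rfl fun ν _ => ?_
            rw [← Finset.mul_sum, ← Finset.mul_sum, hPηd x B' D ν]
        _ = ∑ F, ∑ ν, v ν * (eta' p D F * pd (fun y => Λ y F B') ν x) := Finset.sum_comm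
        _ = ∑ F, eta' p D F * vdΛ F B' := by
            refine Finset.sum_congr rfl fun F _ => ?_
            rw [hvdΛ]
            simp only
            rw [Finset.mul_sum]
            exact Finset.sum_congr rfl fun ν _ => by ring
    have key2 : ∑ A, ∑ F, eta' p A F * (vdΛ A C * Λ x F B + Λ x A C * vdΛ F B) = 0 := by
      calc ∑ A, ∑ F, eta' p A F * (vdΛ A C * Λ x F B + Λ x A C * vdΛ F B)
          = ∑ A, ∑ F, ∑ ν, v ν * (pd (fun y => Λ y A C) ν x * eta' p A F * Λ x F B
              + Λ x A C * eta' p A F * pd (fun y => Λ y F B) ν x) := by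
            refine Finset.sum_congr rfl fun A _ => Finset.sum_congr rfl fun F _ => ?_
            rw [hvdΛ]
            simp only
            simp only [mul_add, Finset.mul_sum, Finset.sum_mul]
            rw [← Finset.sum_add_distrib]
            exact Finset.sum_congr rfl fun ν _ => by ring
        _ = ∑ ν, ∑ A, ∑ F, v ν * (pd (fun y => Λ y A C) ν x * eta' p A F * Λ x F B
              + Λ x A C * eta' p A F * pd (fun y => Λ y F B) ν x) := sum_rot _
        _ = ∑ ν, v ν * (∑ A, ∑ F, (pd (fun y => Λ y A C) ν x * eta' p A F * Λ x F B
              + Λ x A C * eta' p A F * pd (fun y => Λ y F B) ν x)) := by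
            refine Finset.sum_congr rfl fun ν _ => ?_
            rw [Finset.mul_sum]
            refine Finset.sum_congr rfl fun A _ => ?_
            rw [Finset.mul_sum]
        _ = 0 := by
            refine Finset.sum_eq_zero fun ν _ => ?_
            rw [hΛlord x C B ν, mul_zero]
    -- the main reduction
    have main : ∀ B' C',
        ∑ A, eta' p A B' * (∑ D, (-(vdP A D * Λ x D C') + P x A D * ∑ F, Λ x F C' * G D F))
        = (∑ D, ∑ F, eta' p D F * (-(vdΛ F B' * Λ x D C')))
          + ∑ E, ∑ F, Λ x F B' * Λ x E C' * (∑ D, eta' p D F * G D E) := by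
      intro B' C'
      calc ∑ A, eta' p A B' * (∑ D, (-(vdP A D * Λ x D C') + P x A D * ∑ F, Λ x F C' * G D F))
          = ∑ A, ∑ D, (eta' p A B' * -(vdP A D * Λ x D C')
              + eta' p A B' * (P x A D * ∑ F, Λ x F C' * G D F)) := by
            refine Finset.sum_congr rfl fun A _ => ?_
            rw [Finset.mul_sum]
            exact Finset.sum_congr rfl fun D _ => by rw [mul_add]
        _ = (∑ A, ∑ D, eta' p A B' * -(vdP A D * Λ x D C'))
              + ∑ A, ∑ D, eta' p A B' * (P x A D * ∑ F, Λ x F C' * G D F) := by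
            simp only [Finset.sum_add_distrib]
        _ = (∑ D, -((∑ A, eta' p A B' * vdP A D) * Λ x D C'))
              + ∑ D, (∑ A, eta' p A B' * P x A D) * (∑ F, Λ x F C' * G D F) := by
            congr 1
            · rw [Finset.sum_comm]
              refine Finset.sum_congr rfl fun D _ => ?_
              rw [Finset.sum_mul, ← Finset.sum_neg_distrib]
              exact Finset.sum_congr rfl fun A _ => by ring
            · rw [Finset.sum_comm]
              refine Finset.sum_congr rfl fun D _ => ?_
              rw [Finset.sum_mul]
              exact Finset.sum_congr rfl fun A _ => by ring
        _ = (∑ D, -((∑ F, eta' p D F * vdΛ F B') * Λ x D C'))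
              + ∑ D, (∑ F, eta' p D F * Λ x F B') * (∑ E, Λ x E C' * G D E) := by
            congr 1
            · exact Finset.sum_congr rfl fun D _ => by rw [key1 B' D]
            · exact Finset.sum_congr rfl fun D _ => by rw [hPη x B' D]
        _ = (∑ D, ∑ F, eta' p D F * (-(vdΛ F B' * Λ x D C')))
              + ∑ E, ∑ F, Λ x F B' * Λ x E C' * (∑ D, eta' p D F * G D E) := by
            congr 1
            · refine Finset.sum_congr rfl fun D _ => ?_
              rw [Finset.sum_mul, ← Finset.sum_neg_distrib]
              exact Finset.sum_congr rfl fun F _ => by ring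
            · calc ∑ D, (∑ F, eta' p D F * Λ x F B') * (∑ E, Λ x E C' * G D E)
                  = ∑ D, ∑ F, ∑ E, (eta' p D F * Λ x F B') * (Λ x E C' * G D E) := by
                    refine Finset.sum_congr rfl fun D _ => ?_
                    rw [Finset.sum_mul_sum]
                _ = ∑ E, ∑ D, ∑ F, (eta' p D F * Λ x F B') * (Λ x E C' * G D E) := sum_rot _
                _ = ∑ E, ∑ F, ∑ D, (eta' p D F * Λ x F B') * (Λ x E C' * G D E) := by
                    exact Finset.sum_congr rfl fun E _ => Finset.sum_comm
                _ = ∑ E, ∑ F, Λ x F B' * Λ x E C' * (∑ D, eta' p D F * G D E) := by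
                    refine Finset.sum_congr rfl fun E _ => Finset.sum_congr rfl fun F _ => ?_
                    rw [Finset.mul_sum]
                    exact Finset.sum_congr rfl fun D _ => by ring
    -- the two vanishing pieces
    have hsum : (∑ D, ∑ F, eta' p D F * (vdΛ F B * Λ x D C))
        + (∑ D, ∑ F, eta' p D F * (vdΛ F C * Λ x D B)) = 0 := by
      calc (∑ D, ∑ F, eta' p D F * (vdΛ F B * Λ x D C))
            + (∑ D, ∑ F, eta' p D F * (vdΛ F C * Λ x D B))
          = (∑ A, ∑ F, eta' p A F * (Λ x A C * vdΛ F B))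
            + (∑ A, ∑ F, eta' p A F * (vdΛ A C * Λ x F B)) := by
            congr 1
            · exact Finset.sum_congr rfl fun D _ => Finset.sum_congr rfl fun F _ => by ring
            · conv_lhs => rw [Finset.sum_comm]
              refine Finset.sum_congr rfl fun F _ => Finset.sum_congr rfl fun D _ => ?_
              rw [eta'_symm]
        _ = ∑ A, ∑ F, eta' p A F * (vdΛ A C * Λ x F B + Λ x A C * vdΛ F B) := by
            rw [add_comm, ← Finset.sum_add_distrib]
            refine Finset.sum_congr rfl fun A _ => ?_
            rw [← Finset.sum_add_distrib]
            exact Finset.sum_congr rfl fun F _ => by ring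
        _ = 0 := key2
    have claim1 : (∑ D, ∑ F, eta' p D F * (-(vdΛ F B * Λ x D C)))
        + (∑ D, ∑ F, eta' p D F * (-(vdΛ F C * Λ x D B))) = 0 := by
      simp only [mul_neg, Finset.sum_neg_distrib]
      rw [← neg_add, hsum, neg_zero]
    have hH : ∀ F E, (∑ D, eta' p D F * G D E) + (∑ D, eta' p D E * G D F) = 0 := by
      intro F E
      have h2' := h2 x F E v hv
      rw [← Finset.sum_add_distrib]
      simp only [hG]
      exact h2'
    have claim2 : (∑ E, ∑ F, Λ x F B * Λ x E C * (∑ D, eta' p D F * G D E))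
        + (∑ E, ∑ F, Λ x F C * Λ x E B * (∑ D, eta' p D F * G D E)) = 0 := by
      calc (∑ E, ∑ F, Λ x F B * Λ x E C * (∑ D, eta' p D F * G D E))
            + (∑ E, ∑ F, Λ x F C * Λ x E B * (∑ D, eta' p D F * G D E))
          = (∑ E, ∑ F, Λ x F B * Λ x E C * (∑ D, eta' p D F * G D E))
            + (∑ E, ∑ F, Λ x F B * Λ x E C * (∑ D, eta' p D E * G D F)) := by
            congr 1
            conv_lhs => rw [Finset.sum_comm]
            refine Finset.sum_congr rfl fun E _ => Finset.sum_congr rfl fun F _ => ?_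
            ring
          _ = ∑ E, ∑ F, Λ x F B * Λ x E C * ((∑ D, eta' p D F * G D E)
                + (∑ D, eta' p D E * G D F)) := by
            rw [← Finset.sum_add_distrib]
            refine Finset.sum_congr rfl fun E _ => ?_
            rw [← Finset.sum_add_distrib]
            exact Finset.sum_congr rfl fun F _ => by rw [mul_add]
          _ = 0 := by
            refine Finset.sum_eq_zero fun E _ => Finset.sum_eq_zero fun F _ => ?_
            rw [hH F E, mul_zero]
    -- assemble
    calc ∑ A, (eta' p A B * (∑ μ, ∑ ν, t' x C μ * v ν * dcForm c' A μ ν x)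
          + eta' p A C * (∑ μ, ∑ ν, t' x B μ * v ν * dcForm c' A μ ν x))
        = ∑ A, (eta' p A B * (∑ D, (-(vdP A D * Λ x D C) + P x A D * ∑ F, Λ x F C * G D F))
            + eta' p A C * (∑ D, (-(vdP A D * Λ x D B) + P x A D * ∑ F, Λ x F B * G D F))) := by
          refine Finset.sum_congr rfl fun A _ => ?_
          rw [hT A C, hT A B]
      _ = (∑ A, eta' p A B * (∑ D, (-(vdP A D * Λ x D C) + P x A D * ∑ F, Λ x F C * G D F)))
            + ∑ A, eta' p A C * (∑ D, (-(vdP A D * Λ x D B) + P x A D * ∑ F, Λ x F B * G D F)) :=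
          Finset.sum_add_distrib
      _ = ((∑ D, ∑ F, eta' p D F * (-(vdΛ F B * Λ x D C)))
            + ∑ E, ∑ F, Λ x F B * Λ x E C * (∑ D, eta' p D F * G D E))
          + ((∑ D, ∑ F, eta' p D F * (-(vdΛ F C * Λ x D B)))
            + ∑ E, ∑ F, Λ x F C * Λ x E B * (∑ D, eta' p D F * G D E)) := by
          rw [main B C, main C B]
      _ = 0 := by linarith [claim1, claim2]
  exact ⟨condI, condII⟩
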